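/- Let p ≥ 3, q ≥ 2, let G = N(p,q) be the free nilpotent group of class p and rank q with generators a_1,…,a_q, write a = a_1, b = a_2, and let R be the left-nested iterated commutator ⁅a, b, b, …, b⁆ with p − 2 entries in total (so R = a when p = 3). Set f = ⁅R, b, a⁆ and g = ⁅R, b, b⁆. Then for all integers m, n: if f^m · g^n = 1 in G, then m = 0 and n = 0. -/

import Mathlib

open scoped commutatorElement

/-- The free nilpotent group `N(p,q)` of class `p` and rank `q`: the quotient of the free
group on `q` generators by the `p`-th term of its lower central series. -/
def FreeNilpotent (p q : ℕ) : Type :=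
  FreeGroup (Fin q) ⧸ Subgroup.lowerCentralSeries (⊤ : Subgroup (FreeGroup (Fin q))) p

instance (p q : ℕ) : Group (FreeNilpotent p q) :=
  QuotientGroup.Quotient.group _

/-- The images `a_1, …, a_q` in `N(p,q)` of the free generators `e_1, …, e_q`. -/
def FreeNilpotent.gen (p q : ℕ) (i : Fin q) : FreeNilpotent p q :=
  QuotientGroup.mk (FreeGroup.of i)

/-- The left-nested iterated commutator `⁅x₁, …, xₙ⁆ = ⁅⁅…⁅⁅x₁,x₂⁆,x₃⁆,…⁆,xₙ⁆` of a list of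
group elements (by convention `1` for the empty list, and `x` for the singleton list `[x]`). -/
def nestedCommutator {G : Type*} [Group G] : List G → G
  | [] => 1
  | x :: xs => xs.foldl (fun u v => ⁅u, v⁆) x

namespace FGAux

variable {p : ℕ}

abbrev Mat (p : ℕ) := Matrix (Fin (p+1)) (Fin (p+1)) ℤ

def supp (k : ℕ) (M : Mat p) : Prop :=
  ∀ i j : Fin (p+1), (j : ℕ) < (i : ℕ) + k → M i j = 0

lemma supp_zero (k : ℕ) : supp k (0 : Mat p) := fun _ _ _ => rfl
lemma supp_add {k : ℕ} {M N : Mat p} (hM : supp k M) (hN : supp k N) :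
    supp k (M + N) := by
  intro i j hij; simp [Matrix.add_apply, hM i j hij, hN i j hij]
lemma supp_neg {k : ℕ} {M : Mat p} (hM : supp k M) : supp k (-M) := by
  intro i j hij; simp [Matrix.neg_apply, hM i j hij]
lemma supp_sub {k : ℕ} {M N : Mat p} (hM : supp k M) (hN : supp k N) :
    supp k (M - N) := by
  intro i j hij; simp [Matrix.sub_apply, hM i j hij, hN i j hij]
lemma supp_mono {k l : ℕ} (hkl : k ≤ l) {M : Mat p} (hM : supp l M) : supp k M :=
  fun i j hij => hM i j (by omega)
lemma supp_mul {k l : ℕ} {M N : Mat p} (hM : supp k M) (hN : supp l N) :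
    supp (k + l) (M * N) := by
  intro i j hij
  rw [Matrix.mul_apply]
  apply Finset.sum_eq_zero
  intro t _
  by_cases ht : (t : ℕ) < (i : ℕ) + k
  · rw [hM i t ht, zero_mul]
  · rw [hN t j (by omega), mul_zero]
lemma supp_eq_zero {k : ℕ} (hk : p + 1 ≤ k) {M : Mat p} (hM : supp k M) : M = 0 := by
  ext i j; exact hM i j (by omega)

lemma supp_one_zero : supp 0 (1 : Mat p) := by
  intro i j hij
  exact Matrix.one_apply_ne (by intro h; rw [h] at hij; omega)

lemma supp_pow {M : Mat p} (hM : supp 1 M) (k : ℕ) : supp k (M ^ k) := by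
  induction k with
  | zero => simpa using supp_one_zero
  | succ k ih =>
      rw [pow_succ]
      exact supp_mul ih hM

/-- geometric-series inverse of `1 + M` -/
noncomputable def geom (M : Mat p) : Mat p := ∑ k ∈ Finset.range (p + 1), (-M) ^ k

lemma geom_mul {M : Mat p} (hM : supp 1 M) : (1 + M) * geom M = 1 := by
  have h2 : ((-M) - 1) * geom M = (-M) ^ (p+1) - 1 := by
    simpa [geom] using mul_geom_sum (-M) (p+1)
  have h3 : (-M) ^ (p + 1) = 0 := by
    apply supp_eq_zero le_rfl
    exact supp_pow (supp_neg hM) (p+1)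
  have h1 : (1 + M) * geom M = -(((-M) - 1) * geom M) := by noncomm_ring
  rw [h1, h2, h3]
  noncomm_ring
lemma mul_geom {M : Mat p} (hM : supp 1 M) : geom M * (1 + M) = 1 := by
  have h2 : geom M * ((-M) - 1) = (-M) ^ (p+1) - 1 := by
    simpa [geom] using geom_sum_mul (-M) (p+1)
  have h3 : (-M) ^ (p + 1) = 0 := by
    apply supp_eq_zero le_rfl
    exact supp_pow (supp_neg hM) (p+1)
  have h1 : geom M * (1 + M) = -(geom M * ((-M) - 1)) := by noncomm_ring
  rw [h1, h2, h3]
  noncomm_ring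

/-- unit `1 + M` for `M` strictly upper triangular -/
noncomputable def unip (M : Mat p) (hM : supp 1 M) : (Mat p)ˣ :=
  ⟨1 + M, geom M, geom_mul hM, mul_geom hM⟩

lemma supp_geom_sub_one {M : Mat p} (hM : supp 1 M) : supp 1 (geom M - 1) := by
  have : geom M = (∑ k ∈ Finset.range p, (-M) ^ (k+1)) + (-M) ^ 0 := by
    rw [geom, Finset.sum_range_succ']
  rw [this]
  simp only [pow_zero, add_sub_cancel_right]
  intro i j hij
  rw [Matrix.sum_apply]
  apply Finset.sum_eq_zero
  intro t _
  exact supp_mono (by omega) (supp_pow (supp_neg hM) (t+1)) i j hij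

lemma unip_coe {M : Mat p} (hM : supp 1 M) : ((unip M hM : (Mat p)ˣ) : Mat p) = 1 + M := rfl

/-- The congruence-type subgroups `H k`. -/
def H (p k : ℕ) : Subgroup (Mat p)ˣ where
  carrier := {x | supp k ((x : Mat p) - 1) ∧ supp k ((↑x⁻¹ : Mat p) - 1)}
  one_mem' := by
    constructor <;> · simp only [Units.val_one, sub_self, inv_one]; exact supp_zero _
  mul_mem' := by
    rintro x y ⟨hx, hx'⟩ ⟨hy, hy'⟩
    constructor
    · have : ((x * y : (Mat p)ˣ) : Mat p) - 1
          = ((x : Mat p) - 1) * ((y : Mat p) - 1) + ((x : Mat p) - 1) + ((y : Mat p) - 1) := by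
        simp only [Units.val_mul]; noncomm_ring
      rw [this]
      exact supp_add (supp_add (supp_mono (by omega) (supp_mul hx hy)) hx) hy
    · have : ((↑(x * y)⁻¹ : Mat p)) - 1
          = ((↑y⁻¹ : Mat p) - 1) * ((↑x⁻¹ : Mat p) - 1) + ((↑y⁻¹ : Mat p) - 1) + ((↑x⁻¹ : Mat p) - 1) := by
        rw [mul_inv_rev]; simp only [Units.val_mul]; noncomm_ring
      rw [this]
      exact supp_add (supp_add (supp_mono (by omega) (supp_mul hy' hx')) hy') hx'
  inv_mem' := by
    rintro x ⟨hx, hx'⟩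
    refine ⟨hx', ?_⟩
    simpa using hx

lemma mem_H_iff {k : ℕ} {x : (Mat p)ˣ} :
    x ∈ H p k ↔ supp k ((x : Mat p) - 1) ∧ supp k ((↑x⁻¹ : Mat p) - 1) := Iff.rfl

lemma unip_mem_H1 {M : Mat p} (hM : supp 1 M) : unip M hM ∈ H p 1 := by
  constructor
  · simpa [unip_coe] using hM
  · simpa [unip] using supp_geom_sub_one hM

/-- key commutator computation -/
lemma commutator_sub_one (x y : (Mat p)ˣ) :
    ((⁅x, y⁆ : (Mat p)ˣ) : Mat p) - 1 =
      (((x : Mat p) - 1) * ((y : Mat p) - 1) - ((y : Mat p) - 1) * ((x : Mat p) - 1)) *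
        ((↑x⁻¹ : Mat p) * (↑y⁻¹ : Mat p)) := by
  have hx : (x : Mat p) * (↑x⁻¹ : Mat p) = 1 := by
    rw [← Units.val_mul, mul_inv_cancel, Units.val_one]
  have hy : (y : Mat p) * (↑y⁻¹ : Mat p) = 1 := by
    rw [← Units.val_mul, mul_inv_cancel, Units.val_one]
  have hc : ((⁅x, y⁆ : (Mat p)ˣ) : Mat p)
      = (x : Mat p) * (y : Mat p) * (↑x⁻¹ : Mat p) * (↑y⁻¹ : Mat p) := by
    rw [commutatorElement_def]; simp [Units.val_mul]
  rw [hc]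
  have expand : (((x : Mat p) - 1) * ((y : Mat p) - 1) - ((y : Mat p) - 1) * ((x : Mat p) - 1))
      = (x : Mat p) * (y : Mat p) - (y : Mat p) * (x : Mat p) := by noncomm_ring
  rw [expand, sub_mul]
  have h1 : (y : Mat p) * (x : Mat p) * ((↑x⁻¹ : Mat p) * (↑y⁻¹ : Mat p)) = 1 := by
    calc (y : Mat p) * (x : Mat p) * ((↑x⁻¹ : Mat p) * (↑y⁻¹ : Mat p))
        = (y : Mat p) * ((x : Mat p) * (↑x⁻¹ : Mat p)) * (↑y⁻¹ : Mat p) := by noncomm_ring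
      _ = 1 := by rw [hx, mul_one, hy]
  rw [← mul_assoc, h1]

lemma comm_supp {k l : ℕ} {u v : (Mat p)ˣ}
    (hu1 : supp k ((u : Mat p) - 1)) (hv1 : supp l ((v : Mat p) - 1))
    (hu2 : supp k ((↑u⁻¹ : Mat p) - 1)) (hv2 : supp l ((↑v⁻¹ : Mat p) - 1)) :
    supp (k + l) (((⁅u, v⁆ : (Mat p)ˣ) : Mat p) - 1) := by
  rw [commutator_sub_one]
  have hD : supp (k + l)
      (((u : Mat p) - 1) * ((v : Mat p) - 1) - ((v : Mat p) - 1) * ((u : Mat p) - 1)) := by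
    apply supp_sub (supp_mul hu1 hv1)
    have := supp_mul hv1 hu1
    rwa [Nat.add_comm] at this
  have ht : supp 0 ((↑u⁻¹ : Mat p) * (↑v⁻¹ : Mat p) - 1) := by
    have heq : (↑u⁻¹ : Mat p) * (↑v⁻¹ : Mat p) - 1
        = ((↑u⁻¹ : Mat p) - 1) * ((↑v⁻¹ : Mat p) - 1) + ((↑u⁻¹ : Mat p) - 1) + ((↑v⁻¹ : Mat p) - 1) := by
      noncomm_ring
    rw [heq]
    exact supp_add (supp_add (supp_mono (by omega) (supp_mul hu2 hv2))
      (supp_mono (by omega) hu2)) (supp_mono (by omega) hv2)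
  have heq2 : ((↑u⁻¹ : Mat p) * (↑v⁻¹ : Mat p))
      = ((↑u⁻¹ : Mat p) * (↑v⁻¹ : Mat p) - 1) + 1 := by noncomm_ring
  rw [heq2, mul_add, mul_one]
  exact supp_add (by simpa using supp_mul hD ht) hD

lemma commutator_mem_H {k l : ℕ} {x y : (Mat p)ˣ} (hx : x ∈ H p k) (hy : y ∈ H p l) :
    ⁅x, y⁆ ∈ H p (k + l) := by
  obtain ⟨hx1, hx2⟩ := hx
  obtain ⟨hy1, hy2⟩ := hy
  constructor
  · exact comm_supp hx1 hy1 hx2 hy2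
  · rw [commutatorElement_inv]
    have := comm_supp hy1 hx1 hy2 hx2
    rwa [Nat.add_comm] at this


lemma H_mono {k l : ℕ} (hkl : k ≤ l) : H p l ≤ H p k := by
  rintro x ⟨h1, h2⟩
  exact ⟨supp_mono hkl h1, supp_mono hkl h2⟩

/-- The key step lemma: commutator with controlled error terms. -/
lemma step {k : ℕ} {x y : (Mat p)ˣ} {u e v : Mat p}
    (hx : (x : Mat p) = 1 + u + e) (hy : (y : Mat p) = 1 + v)
    (hu : supp k u) (he : supp (k+1) e) (_hv : supp 1 v)
    (hx1 : x ∈ H p 1) (hy1 : y ∈ H p 1) :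
    ∃ e', supp (k+2) e' ∧
      ((⁅x, y⁆ : (Mat p)ˣ) : Mat p) = 1 + (u * v - v * u) + e' := by
  have hxm1 : (x : Mat p) - 1 = u + e := by rw [hx]; noncomm_ring
  have hym1 : (y : Mat p) - 1 = v := by rw [hy]; noncomm_ring
  set t : Mat p := (↑x⁻¹ : Mat p) * (↑y⁻¹ : Mat p) - 1 with ht_def
  have ht : supp 1 t := by
    have heq : t = ((↑x⁻¹ : Mat p) - 1) * ((↑y⁻¹ : Mat p) - 1)
        + ((↑x⁻¹ : Mat p) - 1) + ((↑y⁻¹ : Mat p) - 1) := by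
      rw [ht_def]; noncomm_ring
    rw [heq]
    exact supp_add (supp_add (supp_mono (by omega) (supp_mul hx1.2 hy1.2)) hx1.2) hy1.2
  have hD : ((x : Mat p) - 1) * ((y : Mat p) - 1) - ((y : Mat p) - 1) * ((x : Mat p) - 1)
      = (u * v - v * u) + (e * v - v * e) := by
    rw [hxm1, hym1]; noncomm_ring
  have hE1 : supp (k+2) (e * v - v * e) := by
    apply supp_sub (supp_mul he _hv)
    have := supp_mul _hv he
    exact supp_mono (by omega) this
  have hcomm := commutator_sub_one x y
  rw [hD] at hcomm
  have hxy : (↑x⁻¹ : Mat p) * (↑y⁻¹ : Mat p) = 1 + t := by rw [ht_def]; noncomm_ring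
  rw [hxy] at hcomm
  refine ⟨(e * v - v * e) + ((u * v - v * u) + (e * v - v * e)) * t, ?_, ?_⟩
  · apply supp_add hE1
    apply supp_mono (le_refl _)
    have h1 : supp (k+1) ((u * v - v * u) + (e * v - v * e)) := by
      apply supp_add
      · exact supp_sub (supp_mul hu _hv) (by
          have := supp_mul _hv hu
          exact supp_mono (by omega) this)
      · exact supp_mono (by omega) hE1
    have := supp_mul h1 ht
    exact supp_mono (by omega) this
  · have : ((⁅x, y⁆ : (Mat p)ˣ) : Mat p) - 1
        = (u * v - v * u) + ((e * v - v * e) + ((u * v - v * u) + (e * v - v * e)) * t) := by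
      rw [hcomm]; noncomm_ring
    have h2 := congrArg (· + (1 : Mat p)) this
    simpa [sub_add_cancel, add_assoc, add_comm, add_left_comm] using h2

/-- single-entry matrix -/
def elem (r c : Fin (p+1)) : Mat p :=
  fun i j => if i = r ∧ j = c then 1 else 0

lemma elem_apply (r c i j : Fin (p+1)) :
    elem r c i j = if i = r ∧ j = c then 1 else 0 := rfl

lemma supp_elem {k : ℕ} {r c : Fin (p+1)} (h : (r : ℕ) + k ≤ (c : ℕ)) :
    supp k (elem r c) := by
  intro i j hij
  rw [elem_apply, if_neg]
  rintro ⟨rfl, rfl⟩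
  omega

/-- shift matrix with entries `(i, i+1)` for `lo ≤ i` -/
def Bmat (p lo : ℕ) : Mat p :=
  fun i j => if (i : ℕ) + 1 = (j : ℕ) ∧ lo ≤ (i : ℕ) then 1 else 0

lemma supp_Bmat (lo : ℕ) : supp 1 (Bmat p lo) := by
  intro i j hij
  rw [Bmat, if_neg]
  rintro ⟨h1, h2⟩
  omega

lemma elem_mul_Bmat {lo : ℕ} {r c c' : Fin (p+1)} (h1 : lo ≤ (c : ℕ))
    (h2 : (c' : ℕ) = (c : ℕ) + 1) :
    elem r c * Bmat p lo = elem r c' := by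
  ext i j
  rw [Matrix.mul_apply]
  rw [Finset.sum_eq_single c]
  · rw [elem_apply, elem_apply, Bmat]
    by_cases hir : i = r
    · simp only [hir, true_and, if_true]
      by_cases hj : j = c'
      · rw [if_pos hj, if_pos ⟨by omega, h1⟩, mul_one]
      · rw [if_neg hj, if_neg, mul_zero]
        rintro ⟨hj1, _⟩
        exact hj (Fin.ext (by omega))
    · simp [hir]
  · intro t _ htc
    rw [elem_apply, if_neg (by rintro ⟨_, rfl⟩; exact htc rfl), zero_mul]
  · intro hc
    exact absurd (Finset.mem_univ c) hc

lemma elem_mul_Bmat_zero {lo : ℕ} {r c : Fin (p+1)} (h : (c : ℕ) < lo ∨ (c : ℕ) = p) :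
    elem r c * Bmat p lo = 0 := by
  ext i j
  rw [Matrix.mul_apply]
  apply Finset.sum_eq_zero
  intro t _
  rw [elem_apply, Bmat]
  by_cases htc : i = r ∧ t = c
  · rw [if_pos htc, if_neg, mul_zero]
    rintro ⟨ht1, ht2⟩
    rw [htc.2] at ht1 ht2
    rcases h with h | h
    · omega
    · have := j.isLt; omega
  · rw [if_neg htc, zero_mul]

lemma Bmat_mul_elem_zero {lo : ℕ} {r c : Fin (p+1)} (h : (r : ℕ) < lo + 1) :
    Bmat p lo * elem r c = 0 := by
  ext i j
  rw [Matrix.mul_apply]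
  apply Finset.sum_eq_zero
  intro t _
  rw [elem_apply, Bmat]
  by_cases hbt : (i : ℕ) + 1 = (t : ℕ) ∧ lo ≤ (i : ℕ)
  · rw [if_pos hbt, if_neg, mul_zero]
    rintro ⟨rfl, _⟩
    omega
  · rw [if_neg hbt, zero_mul]

lemma elem_mul_elem_zero {r c r' c' : Fin (p+1)} (h : c ≠ r') :
    elem r c * elem r' c' = 0 := by
  ext i j
  rw [Matrix.mul_apply]
  apply Finset.sum_eq_zero
  intro t _
  rw [elem_apply, elem_apply]
  by_cases h1 : i = r ∧ t = c
  · rw [if_pos h1, if_neg, mul_zero]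
    rintro ⟨rfl, _⟩
    exact h h1.2.symm
  · rw [if_neg h1, zero_mul]

lemma elem_mul_elem {r c c' : Fin (p+1)} :
    elem r c * elem c c' = elem r c' := by
  ext i j
  rw [Matrix.mul_apply]
  rw [Finset.sum_eq_single c]
  · rw [elem_apply, elem_apply, elem_apply]
    by_cases hir : i = r
    · by_cases hj : j = c'
      · simp [hir, hj]
      · simp [hir, hj]
    · simp [hir]
  · intro t _ htc
    rw [elem_apply, if_neg (by rintro ⟨_, rfl⟩; exact htc rfl), zero_mul]
  · intro hc
    exact absurd (Finset.mem_univ c) hc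


/-- The chain lemma: iterating commutators with `b = 1 + Bmat lo` shifts a single-entry
leading term one column to the right each time. -/
lemma chain {lo : ℕ} {b : (Mat p)ˣ} (hbv : (b : Mat p) = 1 + Bmat p lo) (hb1 : b ∈ H p 1)
    {r : Fin (p+1)} (hr : (r : ℕ) < lo) :
    ∀ (j : ℕ) (x : (Mat p)ˣ) (k c0 : ℕ) (hc : c0 + j ≤ p) (hlo : lo ≤ c0)
      (hrc : (r : ℕ) + k ≤ c0) (hx1 : x ∈ H p 1) (hxH : x ∈ H p k)
      (e : Mat p) (he : supp (k+1) e)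
      (hx : (x : Mat p) = 1 + elem r ⟨c0, by omega⟩ + e),
      ∃ e', supp (k+j+1) e' ∧
        (((fun u => ⁅u, b⁆)^[j] x : (Mat p)ˣ) : Mat p) = 1 + elem r ⟨c0 + j, by omega⟩ + e' ∧
        (fun u => ⁅u, b⁆)^[j] x ∈ H p (k+j) ∧ (fun u => ⁅u, b⁆)^[j] x ∈ H p 1 := by
  intro j
  induction j with
  | zero =>
      intro x k c0 hc hlo hrc hx1 hxH e he hx
      exact ⟨e, he, by simpa using hx, by simpa using hxH, by simpa using hx1⟩
  | succ j ih =>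
      intro x k c0 hc hlo hrc hx1 hxH e he hx
      have hu : supp k (elem r (⟨c0, by omega⟩ : Fin (p+1))) := supp_elem (by simp; omega)
      obtain ⟨e2, he2, hval⟩ := step hx hbv hu he (supp_Bmat lo) hx1 hb1
      have hprod : elem r (⟨c0, by omega⟩ : Fin (p+1)) * Bmat p lo
          = elem r ⟨c0 + 1, by omega⟩ := elem_mul_Bmat (by simpa using hlo) (by simp)
      have hprod2 : Bmat p lo * elem r (⟨c0, by omega⟩ : Fin (p+1)) = 0 :=
        Bmat_mul_elem_zero (by omega)
      rw [hprod, hprod2, sub_zero] at hval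
      have hmem1 : ⁅x, b⁆ ∈ H p 1 := H_mono (by omega) (commutator_mem_H hx1 hb1)
      have hmemk : ⁅x, b⁆ ∈ H p (k+1) := commutator_mem_H hxH hb1
      have := ih ⁅x, b⁆ (k+1) (c0+1) (by omega) (by omega) (by omega) hmem1 hmemk e2 he2 hval
      obtain ⟨e', he', hv', hH', h1'⟩ := this
      rw [Function.iterate_succ_apply]
      refine ⟨e', supp_mono (by omega) he', ?_, ?_, h1'⟩
      · have hfin : (⟨c0 + 1 + j, by omega⟩ : Fin (p+1)) = ⟨c0 + (j + 1), by omega⟩ :=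
          Fin.mk_eq_mk.mpr (by omega)
        rw [hfin] at hv'
        exact hv'
      · have : k + (j + 1) = k + 1 + j := by omega
        rw [this]
        exact hH'

/-- The top-corner entry functional on `H p p`, as a homomorphism to `Multiplicative ℤ`. -/
noncomputable def tau (p : ℕ) (hp : 1 ≤ p) : H p p →* Multiplicative ℤ where
  toFun x := Multiplicative.ofAdd
    ((((x : (Mat p)ˣ) : Mat p) - 1) ⟨0, by omega⟩ ⟨p, by omega⟩)
  map_one' := by simp
  map_mul' x y := by
    have hx : supp p (((x : (Mat p)ˣ) : Mat p) - 1) := x.2.1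
    have hy : supp p (((y : (Mat p)ˣ) : Mat p) - 1) := y.2.1
    have hprod : (((x : (Mat p)ˣ) : Mat p) - 1) * (((y : (Mat p)ˣ) : Mat p) - 1) = 0 :=
      supp_eq_zero (by omega) (supp_mul hx hy)
    have hxy : (((x * y : H p p) : (Mat p)ˣ) : Mat p) - 1
        = ((((x : (Mat p)ˣ) : Mat p)) - 1) + ((((y : (Mat p)ˣ) : Mat p)) - 1) := by
      push_cast
      have expand : ((x : (Mat p)ˣ) : Mat p) * (((y : (Mat p)ˣ) : Mat p)) - 1
          = (((x : (Mat p)ˣ) : Mat p) - 1) * (((y : (Mat p)ˣ) : Mat p) - 1)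
            + ((((x : (Mat p)ˣ) : Mat p)) - 1) + ((((y : (Mat p)ˣ) : Mat p)) - 1) := by
        noncomm_ring
      rw [expand, hprod]; abel
    simp only [hxy, Matrix.add_apply]
    rw [← ofAdd_add]

/-- Extract the linear equation from `F ^ m * G ^ n = 1`. -/
lemma final_eq {p : ℕ} (hp : 1 ≤ p) {F G : (Mat p)ˣ} (hF : F ∈ H p p) (hG : G ∈ H p p)
    {m n : ℤ} (h : F ^ m * G ^ n = 1) :
    m * (((F : Mat p) - 1) ⟨0, by omega⟩ ⟨p, by omega⟩)
      + n * (((G : Mat p) - 1) ⟨0, by omega⟩ ⟨p, by omega⟩) = 0 := by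
  set u : H p p := ⟨F, hF⟩
  set v : H p p := ⟨G, hG⟩
  have huv : u ^ m * v ^ n = 1 := by
    apply Subtype.ext
    push_cast
    exact h
  have := congrArg (tau p hp) huv
  rw [map_mul, map_zpow, map_zpow, map_one] at this
  have h2 := congrArg Multiplicative.toAdd this
  simp only [toAdd_mul, toAdd_zpow, toAdd_one] at h2
  simpa [tau, smul_eq_mul, u, v] using h2

lemma final_eq_entries {p : ℕ} (hp : 1 ≤ p) {F G : (Mat p)ˣ} (hF : F ∈ H p p) (hG : G ∈ H p p)
    {m n : ℤ} (h : F ^ m * G ^ n = 1) (cF cG : ℤ)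
    (hcF : ((F : Mat p) - 1) ⟨0, by omega⟩ ⟨p, by omega⟩ = cF)
    (hcG : ((G : Mat p) - 1) ⟨0, by omega⟩ ⟨p, by omega⟩ = cG) :
    m * cF + n * cG = 0 := by
  have := final_eq hp hF hG h
  rw [hcF, hcG] at this
  exact this

/-- Images of the lower central series land in the congruence subgroups. -/
lemma lcs_le {q : ℕ} (φ : FreeGroup (Fin q) →* (Mat p)ˣ)
    (hφ : ∀ x, φ x ∈ H p 1) (k : ℕ) :
    Subgroup.lowerCentralSeries (⊤ : Subgroup (FreeGroup (Fin q))) k ≤ (H p (k+1)).comap φ := by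
  induction k with
  | zero => intro x _; exact hφ x
  | succ k ih =>
      rw [lowerCentralSeries_succ]
      apply (Subgroup.closure_le _).mpr
      rintro x ⟨g1, hg1, g2, -, rfl⟩
      show φ (g1 * g2 * g1⁻¹ * g2⁻¹) ∈ H p (k + 1 + 1)
      have hcomm : g1 * g2 * g1⁻¹ * g2⁻¹ = ⁅g1, g2⁆ := rfl
      rw [hcomm, map_commutatorElement]
      exact commutator_mem_H (ih hg1) (hφ g2)

end FGAux

section NestedLemmas

lemma map_nestedCommutator' {G H : Type*} [Group G] [Group H] (f : G →* H) (L : List G) :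
    f (nestedCommutator L) = nestedCommutator (L.map f) := by
  cases L with
  | nil => simp [nestedCommutator]
  | cons x xs =>
      simp only [nestedCommutator, List.map_cons]
      induction xs generalizing x with
      | nil => simp
      | cons y ys ih =>
          simp only [List.foldl_cons, List.map_cons]
          rw [← map_commutatorElement]
          exact ih ⁅x, y⁆

lemma nested_replicate {G : Type*} [Group G] (a b : G) (t : ℕ) :
    nestedCommutator (a :: List.replicate t b) = (fun u => ⁅u, b⁆)^[t] a := by
  induction t generalizing a with
  | zero => simp [nestedCommutator]
  | succ t ih =>
      have hrep : List.replicate (t+1) b = b :: List.replicate t b := rfl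
      rw [hrep]
      show List.foldl (fun u v => ⁅u, v⁆) a (b :: List.replicate t b) = _
      rw [List.foldl_cons]
      rw [Function.iterate_succ_apply]
      exact ih ⁅a, b⁆

end NestedLemmas

open FGAux

lemma rep1_compute {p : ℕ} (hp : 3 ≤ p) (m n : ℤ) (a b : (Mat p)ˣ)
    (hav : (a : Mat p) = 1 + elem ⟨0, by omega⟩ ⟨1, by omega⟩)
    (hbv : (b : Mat p) = 1 + Bmat p 1)
    (ha : a ∈ H p 1) (hb : b ∈ H p 1)
    (h : (⁅(fun u => ⁅u, b⁆)^[p-2] a, a⁆) ^ m * ((fun u => ⁅u, b⁆)^[p-1] a) ^ n = 1) :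
    n = 0 := by
  -- the chain up to p-2 iterations
  obtain ⟨e1, he1, hcval, hcH, hc1⟩ :=
    chain hbv hb (r := ⟨0, by omega⟩) (by simp) (p-2) a 1 1 (by omega) (by omega)
      (by simp) ha ha 0 (supp_zero 2) (by rw [hav, add_zero])
  have hfin1 : (⟨1 + (p-2), by omega⟩ : Fin (p+1)) = ⟨p-1, by omega⟩ :=
    Fin.mk_eq_mk.mpr (by omega)
  rw [hfin1] at hcval
  have he1' : supp ((p-1) + 1) e1 := by
    have : 1 + (p-2) + 1 = (p-1) + 1 := by omega
    rwa [this] at he1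
  have hcH' : (fun u => ⁅u, b⁆)^[p-2] a ∈ H p (p-1) := by
    have : 1 + (p-2) = p - 1 := by omega
    rwa [this] at hcH
  set c := (fun u => ⁅u, b⁆)^[p-2] a with hc_def
  have hu : supp (p-1) (elem (⟨0, by omega⟩ : Fin (p+1)) ⟨p-1, by omega⟩) :=
    supp_elem (by simp)
  -- G = iterate (p-1)
  have hGit : (fun u => ⁅u, b⁆)^[p-1] a = ⁅c, b⁆ := by
    have : p - 1 = (p-2) + 1 := by omega
    rw [this, Function.iterate_succ_apply']
  obtain ⟨e2, he2, hGval⟩ := step hcval hbv hu he1' (supp_Bmat 1) hc1 hb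
  have hprod : elem (⟨0, by omega⟩ : Fin (p+1)) ⟨p-1, by omega⟩ * Bmat p 1
      = elem ⟨0, by omega⟩ ⟨p, by omega⟩ := elem_mul_Bmat (by simp; omega) (by simp; omega)
  have hprod2 : Bmat p 1 * elem (⟨0, by omega⟩ : Fin (p+1)) ⟨p-1, by omega⟩ = 0 :=
    Bmat_mul_elem_zero (by simp)
  rw [hprod, hprod2, sub_zero] at hGval
  have he2' : e2 = 0 := supp_eq_zero (by omega) he2
  rw [he2', add_zero] at hGval
  have hGH : ⁅c, b⁆ ∈ H p p := by
    have := commutator_mem_H hcH' hb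
    have heq : p - 1 + 1 = p := by omega
    rwa [heq] at this
  -- F = ⁅c, a⁆
  obtain ⟨e3, he3, hFval⟩ := step hcval hav hu he1' (supp_elem (by simp)) hc1 ha
  have hz1 : elem (⟨0, by omega⟩ : Fin (p+1)) ⟨p-1, by omega⟩ * elem ⟨0, by omega⟩ ⟨1, by omega⟩
      = 0 := elem_mul_elem_zero (by simp [Fin.ext_iff]; omega)
  have hz2 : elem (⟨0, by omega⟩ : Fin (p+1)) ⟨1, by omega⟩ * elem ⟨0, by omega⟩ ⟨p-1, by omega⟩
      = 0 := elem_mul_elem_zero (by simp [Fin.ext_iff])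
  rw [hz1, hz2, sub_zero] at hFval
  have he3' : e3 = 0 := supp_eq_zero (by omega) he3
  rw [he3', add_zero, add_zero] at hFval
  have hFH : ⁅c, a⁆ ∈ H p p := by
    have := commutator_mem_H hcH' ha
    have heq : p - 1 + 1 = p := by omega
    rwa [heq] at this
  rw [hGit] at h
  have hFe : (((⁅c, a⁆ : (Mat p)ˣ) : Mat p) - 1) (⟨0, by omega⟩ : Fin (p+1)) ⟨p, by omega⟩
      = 0 := by
    have h2 := congrArg
      (fun M : Mat p => (M - 1) (⟨0, by omega⟩ : Fin (p+1)) ⟨p, by omega⟩) hFval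
    beta_reduce at h2
    rw [h2]
    simp
  have hGe : (((⁅c, b⁆ : (Mat p)ˣ) : Mat p) - 1) (⟨0, by omega⟩ : Fin (p+1)) ⟨p, by omega⟩
      = 1 := by
    have h2 := congrArg
      (fun M : Mat p => (M - 1) (⟨0, by omega⟩ : Fin (p+1)) ⟨p, by omega⟩) hGval
    beta_reduce at h2
    rw [h2]
    simp [elem_apply]
  have := final_eq_entries (by omega) hFH hGH h 0 1 hFe hGe
  omega

lemma rep2_compute {p : ℕ} (hp : 3 ≤ p) (m n : ℤ) (a b : (Mat p)ˣ)
    (hav : (a : Mat p) = 1 + (elem ⟨0, by omega⟩ ⟨1, by omega⟩ + elem ⟨1, by omega⟩ ⟨2, by omega⟩))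
    (hbv : (b : Mat p) = 1 + Bmat p 2)
    (ha : a ∈ H p 1) (hb : b ∈ H p 1)
    (h : (⁅(fun u => ⁅u, b⁆)^[p-2] a, a⁆) ^ m * ((fun u => ⁅u, b⁆)^[p-1] a) ^ n = 1) :
    m = 0 := by
  set A : Mat p := elem ⟨0, by omega⟩ ⟨1, by omega⟩ + elem ⟨1, by omega⟩ ⟨2, by omega⟩ with hA_def
  have hA : supp 1 A := supp_add (supp_elem (by simp)) (supp_elem (by simp))
  -- first step: c1 = ⁅a, b⁆
  obtain ⟨e0, he0, hc1val⟩ := step (e := 0) (by rw [hav, add_zero]) hbv hA (supp_zero 2)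
    (supp_Bmat 2) ha hb
  have hAB : A * Bmat p 2 = elem ⟨1, by omega⟩ ⟨3, by omega⟩ := by
    have h1 : elem (⟨0, by omega⟩ : Fin (p+1)) ⟨1, by omega⟩ * Bmat p 2 = 0 :=
      elem_mul_Bmat_zero (by simp)
    have h2 : elem (⟨1, by omega⟩ : Fin (p+1)) ⟨2, by omega⟩ * Bmat p 2
        = elem ⟨1, by omega⟩ ⟨3, by omega⟩ := elem_mul_Bmat (by simp) (by simp)
    rw [hA_def, add_mul, h1, h2, zero_add]
  have hBA : Bmat p 2 * A = 0 := by
    rw [hA_def, mul_add, Bmat_mul_elem_zero (by simp), Bmat_mul_elem_zero (by simp), add_zero]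
  rw [hAB, hBA, sub_zero] at hc1val
  have hc1H : ⁅a, b⁆ ∈ H p 2 := by
    have := commutator_mem_H ha hb
    exact this
  have hc11 : ⁅a, b⁆ ∈ H p 1 := H_mono (by omega) hc1H
  -- chain from c1, j = p-3 steps
  obtain ⟨e1, he1, hcval, hcH, hc1'⟩ :=
    chain hbv hb (r := ⟨1, by omega⟩) (by simp) (p-3) ⁅a, b⁆ 2 3 (by omega) (by omega)
      (by simp) hc11 hc1H e0 he0 hc1val
  have hiter : (fun u => ⁅u, b⁆)^[p-3] ⁅a, b⁆ = (fun u => ⁅u, b⁆)^[p-2] a := by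
    have : p - 2 = (p-3) + 1 := by omega
    rw [this, Function.iterate_succ_apply]
  rw [hiter] at hcval hcH hc1'
  have hfin1 : (⟨3 + (p-3), by omega⟩ : Fin (p+1)) = ⟨p, by omega⟩ :=
    Fin.mk_eq_mk.mpr (by omega)
  rw [hfin1] at hcval
  have he1' : supp ((p-1) + 1) e1 := by
    have : 2 + (p-3) + 1 = (p-1) + 1 := by omega
    rwa [this] at he1
  have hcH' : (fun u => ⁅u, b⁆)^[p-2] a ∈ H p (p-1) := by
    have : 2 + (p-3) = p - 1 := by omega
    rwa [this] at hcH
  set c := (fun u => ⁅u, b⁆)^[p-2] a with hc_def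
  have hu : supp (p-1) (elem (⟨1, by omega⟩ : Fin (p+1)) ⟨p, by omega⟩) :=
    supp_elem (by simp; omega)
  -- F = ⁅c, a⁆
  obtain ⟨e3, he3, hFval⟩ := step hcval hav hu he1' hA hc1' ha
  have huA : elem (⟨1, by omega⟩ : Fin (p+1)) ⟨p, by omega⟩ * A = 0 := by
    rw [hA_def, mul_add, elem_mul_elem_zero (by simp [Fin.ext_iff]; omega),
      elem_mul_elem_zero (by simp [Fin.ext_iff]; omega), add_zero]
  have hAu : A * elem (⟨1, by omega⟩ : Fin (p+1)) ⟨p, by omega⟩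
      = elem ⟨0, by omega⟩ ⟨p, by omega⟩ := by
    rw [hA_def, add_mul, elem_mul_elem, elem_mul_elem_zero (by simp [Fin.ext_iff]), add_zero]
  rw [huA, hAu, zero_sub] at hFval
  have he3' : e3 = 0 := supp_eq_zero (by omega) he3
  rw [he3', add_zero] at hFval
  have hFH : ⁅c, a⁆ ∈ H p p := by
    have := commutator_mem_H hcH' ha
    have heq : p - 1 + 1 = p := by omega
    rwa [heq] at this
  -- G = iterate (p-1) = ⁅c, b⁆
  have hGit : (fun u => ⁅u, b⁆)^[p-1] a = ⁅c, b⁆ := by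
    have : p - 1 = (p-2) + 1 := by omega
    rw [this, Function.iterate_succ_apply']
  obtain ⟨e2, he2, hGval⟩ := step hcval hbv hu he1' (supp_Bmat 2) hc1' hb
  have hprod : elem (⟨1, by omega⟩ : Fin (p+1)) ⟨p, by omega⟩ * Bmat p 2 = 0 :=
    elem_mul_Bmat_zero (by simp)
  have hprod2 : Bmat p 2 * elem (⟨1, by omega⟩ : Fin (p+1)) ⟨p, by omega⟩ = 0 :=
    Bmat_mul_elem_zero (by simp)
  rw [hprod, hprod2, sub_zero] at hGval
  have he2' : e2 = 0 := supp_eq_zero (by omega) he2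
  rw [he2', add_zero, add_zero] at hGval
  have hGH : ⁅c, b⁆ ∈ H p p := by
    have := commutator_mem_H hcH' hb
    have heq : p - 1 + 1 = p := by omega
    rwa [heq] at this
  rw [hGit] at h
  have hFe : (((⁅c, a⁆ : (Mat p)ˣ) : Mat p) - 1) (⟨0, by omega⟩ : Fin (p+1)) ⟨p, by omega⟩
      = -1 := by
    have h2 := congrArg
      (fun M : Mat p => (M - 1) (⟨0, by omega⟩ : Fin (p+1)) ⟨p, by omega⟩) hFval
    beta_reduce at h2
    rw [h2]
    simp [elem_apply]
  have hGe : (((⁅c, b⁆ : (Mat p)ˣ) : Mat p) - 1) (⟨0, by omega⟩ : Fin (p+1)) ⟨p, by omega⟩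
      = 0 := by
    have h2 := congrArg
      (fun M : Mat p => (M - 1) (⟨0, by omega⟩ : Fin (p+1)) ⟨p, by omega⟩) hGval
    beta_reduce at h2
    rw [h2]
    simp
  have := final_eq_entries (by omega) hFH hGH h (-1) 0 hFe hGe
  omega

open FGAux in
lemma image_eq {p q : ℕ} (hp : 3 ≤ p) (hq : 2 ≤ q) (m n : ℤ)
    (A B : Mat p) (hA : supp 1 A) (hB : supp 1 B)
    (hmem :
      ⁅⁅nestedCommutator (FreeGroup.of (⟨0, Nat.lt_of_lt_of_le (by norm_num) hq⟩ : Fin q) ::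
          List.replicate (p - 3) (FreeGroup.of (⟨1, Nat.lt_of_lt_of_le (by norm_num) hq⟩ : Fin q))),
        FreeGroup.of (⟨1, Nat.lt_of_lt_of_le (by norm_num) hq⟩ : Fin q)⁆, FreeGroup.of (⟨0, Nat.lt_of_lt_of_le (by norm_num) hq⟩ : Fin q)⁆ ^ m *
      ⁅⁅nestedCommutator (FreeGroup.of (⟨0, Nat.lt_of_lt_of_le (by norm_num) hq⟩ : Fin q) ::
          List.replicate (p - 3) (FreeGroup.of (⟨1, Nat.lt_of_lt_of_le (by norm_num) hq⟩ : Fin q))),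
        FreeGroup.of (⟨1, Nat.lt_of_lt_of_le (by norm_num) hq⟩ : Fin q)⁆, FreeGroup.of (⟨1, Nat.lt_of_lt_of_le (by norm_num) hq⟩ : Fin q)⁆ ^ n
        ∈ Subgroup.lowerCentralSeries (⊤ : Subgroup (FreeGroup (Fin q))) p) :
    (⁅(fun u => ⁅u, unip B hB⁆)^[p-2] (unip A hA), unip A hA⁆) ^ m *
      ((fun u => ⁅u, unip B hB⁆)^[p-1] (unip A hA)) ^ n = 1 := by
  set ρ : Fin q → (Mat p)ˣ := fun i =>
    if (i : ℕ) = 0 then unip A hA else if (i : ℕ) = 1 then unip B hB else 1 with hρ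
  set φ := FreeGroup.lift ρ with hφdef
  have hρmem : ∀ i, ρ i ∈ H p 1 := by
    intro i
    rw [hρ]
    dsimp only
    split
    · exact unip_mem_H1 hA
    · split
      · exact unip_mem_H1 hB
      · exact (H p 1).one_mem
  have hφ : ∀ x, φ x ∈ H p 1 := by
    intro x
    induction x using FreeGroup.induction_on with
    | C1 => rw [map_one]; exact (H p 1).one_mem
    | of i =>
        rw [hφdef, FreeGroup.lift_apply_of]
        exact hρmem i
    | inv_of i ih => rw [map_inv]; exact (H p 1).inv_mem ih
    | mul x y hx hy => rw [map_mul]; exact (H p 1).mul_mem hx hy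
  have hmem' := lcs_le φ hφ p hmem
  rw [Subgroup.mem_comap] at hmem'
  have h1 : supp (p+1) ((↑(φ (⁅⁅nestedCommutator (FreeGroup.of (⟨0, Nat.lt_of_lt_of_le (by norm_num) hq⟩ : Fin q) ::
          List.replicate (p - 3) (FreeGroup.of (⟨1, Nat.lt_of_lt_of_le (by norm_num) hq⟩ : Fin q))),
        FreeGroup.of (⟨1, Nat.lt_of_lt_of_le (by norm_num) hq⟩ : Fin q)⁆, FreeGroup.of (⟨0, Nat.lt_of_lt_of_le (by norm_num) hq⟩ : Fin q)⁆ ^ m *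
      ⁅⁅nestedCommutator (FreeGroup.of (⟨0, Nat.lt_of_lt_of_le (by norm_num) hq⟩ : Fin q) ::
          List.replicate (p - 3) (FreeGroup.of (⟨1, Nat.lt_of_lt_of_le (by norm_num) hq⟩ : Fin q))),
        FreeGroup.of (⟨1, Nat.lt_of_lt_of_le (by norm_num) hq⟩ : Fin q)⁆, FreeGroup.of (⟨1, Nat.lt_of_lt_of_le (by norm_num) hq⟩ : Fin q)⁆ ^ n)) :
        Mat p) - 1) := hmem'.1
  have hone := sub_eq_zero.mp (supp_eq_zero le_rfl h1)
  have hone' : φ (⁅⁅nestedCommutator (FreeGroup.of (⟨0, Nat.lt_of_lt_of_le (by norm_num) hq⟩ : Fin q) ::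
          List.replicate (p - 3) (FreeGroup.of (⟨1, Nat.lt_of_lt_of_le (by norm_num) hq⟩ : Fin q))),
        FreeGroup.of (⟨1, Nat.lt_of_lt_of_le (by norm_num) hq⟩ : Fin q)⁆, FreeGroup.of (⟨0, Nat.lt_of_lt_of_le (by norm_num) hq⟩ : Fin q)⁆ ^ m *
      ⁅⁅nestedCommutator (FreeGroup.of (⟨0, Nat.lt_of_lt_of_le (by norm_num) hq⟩ : Fin q) ::
          List.replicate (p - 3) (FreeGroup.of (⟨1, Nat.lt_of_lt_of_le (by norm_num) hq⟩ : Fin q))),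
        FreeGroup.of (⟨1, Nat.lt_of_lt_of_le (by norm_num) hq⟩ : Fin q)⁆, FreeGroup.of (⟨1, Nat.lt_of_lt_of_le (by norm_num) hq⟩ : Fin q)⁆ ^ n) = 1 :=
    Units.ext (by simpa using hone)
  rw [map_mul, map_zpow, map_zpow, map_commutatorElement, map_commutatorElement,
    map_commutatorElement, map_commutatorElement, map_nestedCommutator', List.map_cons,
    List.map_replicate] at hone'
  have hφa : φ (FreeGroup.of (⟨0, Nat.lt_of_lt_of_le (by norm_num) hq⟩ : Fin q)) = unip A hA := by
    rw [hφdef, FreeGroup.lift_apply_of, hρ]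
    simp
  have hφb : φ (FreeGroup.of (⟨1, Nat.lt_of_lt_of_le (by norm_num) hq⟩ : Fin q)) = unip B hB := by
    rw [hφdef, FreeGroup.lift_apply_of, hρ]
    simp
  rw [hφa, hφb, nested_replicate] at hone'
  have hit1 : ⁅(fun u => ⁅u, unip B hB⁆)^[p-3] (unip A hA), unip B hB⁆
      = (fun u => ⁅u, unip B hB⁆)^[p-2] (unip A hA) := by
    have h3 : p - 2 = (p - 3) + 1 := by omega
    rw [h3, Function.iterate_succ_apply']
  have hit2 : ⁅(fun u => ⁅u, unip B hB⁆)^[p-2] (unip A hA), unip B hB⁆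
      = (fun u => ⁅u, unip B hB⁆)^[p-1] (unip A hA) := by
    have h3 : p - 1 = (p - 2) + 1 := by omega
    rw [h3, Function.iterate_succ_apply']
  rw [hit1, hit2] at hone'
  exact hone'

open FGAux

/-- In `N(p,q)` with `p ≥ 3`, `q ≥ 2`, write `a = a_1`, `b = a_2`, let `R = ⁅a,b,b,…,b⁆`
be the left-nested iterated commutator with `p - 2` entries in total (so `R = a` when
`p = 3`), and set `f = ⁅R,b,a⁆`, `g = ⁅R,b,b⁆`.  If `f^m * g^n = 1` then `m = n = 0`. -/
theorem f_g_independent_free_nilpotent (p q : ℕ) (hp : 3 ≤ p) (hq : 2 ≤ q) (m n : ℤ)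
    (h :
      ⁅⁅nestedCommutator (FreeNilpotent.gen p q ⟨0, by omega⟩ ::
          List.replicate (p - 3) (FreeNilpotent.gen p q ⟨1, by omega⟩)),
        FreeNilpotent.gen p q ⟨1, by omega⟩⁆, FreeNilpotent.gen p q ⟨0, by omega⟩⁆ ^ m *
      ⁅⁅nestedCommutator (FreeNilpotent.gen p q ⟨0, by omega⟩ ::
          List.replicate (p - 3) (FreeNilpotent.gen p q ⟨1, by omega⟩)),
        FreeNilpotent.gen p q ⟨1, by omega⟩⁆, FreeNilpotent.gen p q ⟨1, by omega⟩⁆ ^ n = 1) :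
    m = 0 ∧ n = 0 := by
  have hkey : (QuotientGroup.mk' (Subgroup.lowerCentralSeries (⊤ : Subgroup (FreeGroup (Fin q))) p))
      (⁅⁅nestedCommutator (FreeGroup.of (⟨0, by omega⟩ : Fin q) ::
          List.replicate (p - 3) (FreeGroup.of (⟨1, by omega⟩ : Fin q))),
        FreeGroup.of (⟨1, by omega⟩ : Fin q)⁆, FreeGroup.of (⟨0, by omega⟩ : Fin q)⁆ ^ m *
      ⁅⁅nestedCommutator (FreeGroup.of (⟨0, by omega⟩ : Fin q) ::
          List.replicate (p - 3) (FreeGroup.of (⟨1, by omega⟩ : Fin q))),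
        FreeGroup.of (⟨1, by omega⟩ : Fin q)⁆, FreeGroup.of (⟨1, by omega⟩ : Fin q)⁆ ^ n)
      = ⁅⁅nestedCommutator (FreeNilpotent.gen p q ⟨0, by omega⟩ ::
          List.replicate (p - 3) (FreeNilpotent.gen p q ⟨1, by omega⟩)),
        FreeNilpotent.gen p q ⟨1, by omega⟩⁆, FreeNilpotent.gen p q ⟨0, by omega⟩⁆ ^ m *
      ⁅⁅nestedCommutator (FreeNilpotent.gen p q ⟨0, by omega⟩ ::
          List.replicate (p - 3) (FreeNilpotent.gen p q ⟨1, by omega⟩)),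
        FreeNilpotent.gen p q ⟨1, by omega⟩⁆, FreeNilpotent.gen p q ⟨1, by omega⟩⁆ ^ n := by
    simp only [map_mul, map_zpow, map_commutatorElement, map_nestedCommutator',
      List.map_cons, List.map_replicate]
    rfl
  have hmem :
      ⁅⁅nestedCommutator (FreeGroup.of (⟨0, by omega⟩ : Fin q) ::
          List.replicate (p - 3) (FreeGroup.of (⟨1, by omega⟩ : Fin q))),
        FreeGroup.of (⟨1, by omega⟩ : Fin q)⁆, FreeGroup.of (⟨0, by omega⟩ : Fin q)⁆ ^ m *
      ⁅⁅nestedCommutator (FreeGroup.of (⟨0, by omega⟩ : Fin q) ::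
          List.replicate (p - 3) (FreeGroup.of (⟨1, by omega⟩ : Fin q))),
        FreeGroup.of (⟨1, by omega⟩ : Fin q)⁆, FreeGroup.of (⟨1, by omega⟩ : Fin q)⁆ ^ n
        ∈ Subgroup.lowerCentralSeries (⊤ : Subgroup (FreeGroup (Fin q))) p := by
    have h2 := hkey.trans h
    rw [QuotientGroup.mk'_apply] at h2
    exact (QuotientGroup.eq_one_iff _).mp h2
  constructor
  · -- m = 0, via the second representation
    have hA : supp 1 (elem (⟨0, by omega⟩ : Fin (p+1)) ⟨1, by omega⟩
        + elem ⟨1, by omega⟩ ⟨2, by omega⟩) :=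
      supp_add (supp_elem (by simp)) (supp_elem (by simp))
    have himg := image_eq hp hq m n _ _ hA (supp_Bmat 2) hmem
    exact rep2_compute hp m n _ _ (unip_coe hA) (unip_coe (supp_Bmat 2))
      (unip_mem_H1 hA) (unip_mem_H1 (supp_Bmat 2)) himg
  · -- n = 0, via the first representation
    have hA : supp 1 (elem (⟨0, by omega⟩ : Fin (p+1)) ⟨1, by omega⟩) :=
      supp_elem (by simp)
    have himg := image_eq hp hq m n _ _ hA (supp_Bmat 1) hmem
    exact rep1_compute hp m n _ _ (unip_coe hA) (unip_coe (supp_Bmat 1))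
      (unip_mem_H1 hA) (unip_mem_H1 (supp_Bmat 1)) himg
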